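/- Under the elementary-system hypotheses, if moreover C_v is a constant function on D, α is nowhere zero on D, and T > 0, C_v > 0, k > 0 on D, then at any point of D the scalar curvature R of the Hessian metric of U is negative if and only if −k/C_v < ∂k/∂S < 0 at that point (equivalently, −1/C_v < ∂(ln k)/∂S < 0). -/

import Mathlib

/-- Partial derivative `∂f/∂x¹` (first coordinate) of a function on `ℝ²`. -/
noncomputable def pS (f : ℝ × ℝ → ℝ) (x : ℝ × ℝ) : ℝ := fderiv ℝ f x (1, 0)

/-- Partial derivative `∂f/∂x²` (second coordinate) of a function on `ℝ²`. -/
noncomputable def pV (f : ℝ × ℝ → ℝ) (x : ℝ × ℝ) : ℝ := fderiv ℝ f x (0, 1)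

/-- Hessian metric entry `η₁₁ = ∂²E/∂x¹∂x¹`. -/
noncomputable def e11 (E : ℝ × ℝ → ℝ) : ℝ × ℝ → ℝ := pS (pS E)

/-- Hessian metric entry `η₁₂ = ∂²E/∂x¹∂x²`. -/
noncomputable def e12 (E : ℝ × ℝ → ℝ) : ℝ × ℝ → ℝ := pV (pS E)

/-- Hessian metric entry `η₂₂ = ∂²E/∂x²∂x²`. -/
noncomputable def e22 (E : ℝ × ℝ → ℝ) : ℝ × ℝ → ℝ := pV (pV E)

/-- Determinant `det η = η₁₁η₂₂ − η₁₂²` of the Hessian metric of `E`. -/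
noncomputable def detHess (E : ℝ × ℝ → ℝ) (x : ℝ × ℝ) : ℝ :=
  e11 E x * e22 E x - (e12 E x) ^ 2

/-- Determinant of the 3×3 matrix `M` with rows `(η₁₁, ∂₁η₁₁, ∂₂η₁₁)`,
`(η₁₂, ∂₁η₁₂, ∂₂η₁₂)`, `(η₂₂, ∂₁η₂₂, ∂₂η₂₂)`. -/
noncomputable def detM (E : ℝ × ℝ → ℝ) (x : ℝ × ℝ) : ℝ :=
  Matrix.det !![e11 E x, pS (e11 E) x, pV (e11 E) x;
                e12 E x, pS (e12 E) x, pV (e12 E) x;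
                e22 E x, pS (e22 E) x, pV (e22 E) x]

/-- Scalar curvature `R = −(1/(4(det η)²))·det M` of the Hessian metric of `E`. -/
noncomputable def scalarCurv (E : ℝ × ℝ → ℝ) (x : ℝ × ℝ) : ℝ :=
  -(1 / (4 * (detHess E x) ^ 2)) * detM E x

/-!
As `C_v = c` is constant, `η₁₁ = T/c`, so `∂_S η₁₁ = η₁₁/c` and `∂_V η₁₁ = η₁₂/c`. Together with the
symmetry of the third derivatives of `U` (`∂_S η₁₂ = ∂_V η₁₁`, `∂_V η₁₂ = ∂_S η₂₂`) this makes the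
second column of `M` equal to `1/c` times the first up to its last entry, whence
`det M = -(∂_S η₂₂ - η₂₂/c) (η₁₁ ∂_S η₂₂ - η₁₂²/c)`. Comparing `∂_S η₁₂ = η₁₂/c` with the formula
for `η₁₂` shows that `α/k` does not depend on `S`, and then `∂_S η₂₂ = Tα²/(k²c²) - ∂_S k/(V k²)`.
Altogether `R = ∂_S k (c ∂_S k + k) / (4 T k²)`, whose sign is that of `∂_S k (c ∂_S k + k)`.
-/

open Filter Topology
open scoped ContDiff

section PartialDeriv

variable {f g : ℝ × ℝ → ℝ} {x : ℝ × ℝ} {d : ℝ}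

theorem Filter.EventuallyEq.pS_eq (h : f =ᶠ[𝓝 x] g) : pS f x = pS g x := by
  rw [pS, pS, h.fderiv_eq]

theorem Filter.EventuallyEq.pV_eq (h : f =ᶠ[𝓝 x] g) : pV f x = pV g x := by
  rw [pV, pV, h.fderiv_eq]

theorem DifferentiableAt.hasDerivAt_pS (hf : DifferentiableAt ℝ f x) :
    HasDerivAt (fun s => f (s, x.2)) (pS f x) x.1 :=
  hf.hasFDerivAt.comp_hasDerivAt_of_eq x.1
    ((hasDerivAt_id x.1).prodMk (hasDerivAt_const x.1 x.2)) rfl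

theorem DifferentiableAt.hasDerivAt_pV (hf : DifferentiableAt ℝ f x) :
    HasDerivAt (fun s => f (x.1, s)) (pV f x) x.2 :=
  hf.hasFDerivAt.comp_hasDerivAt_of_eq x.2
    ((hasDerivAt_const x.2 x.1).prodMk (hasDerivAt_id x.2)) rfl

theorem pS_eq_of_hasDerivAt (hf : DifferentiableAt ℝ f x)
    (h : HasDerivAt (fun s => f (s, x.2)) d x.1) : pS f x = d :=
  hf.hasDerivAt_pS.unique h

theorem pV_eq_of_hasDerivAt (hf : DifferentiableAt ℝ f x)
    (h : HasDerivAt (fun s => f (x.1, s)) d x.2) : pV f x = d :=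
  hf.hasDerivAt_pV.unique h

theorem pS_log (hf : DifferentiableAt ℝ f x) (h : f x ≠ 0) :
    pS (fun y => Real.log (f y)) x = pS f x / f x :=
  pS_eq_of_hasDerivAt (hf.log h) (hf.hasDerivAt_pS.log h)

theorem ContDiffAt.pS {n : ℕ∞ω} (hf : ContDiffAt ℝ (n + 1) f x) : ContDiffAt ℝ n (pS f) x :=
  (hf.fderiv_right le_rfl).clm_apply contDiffAt_const

theorem ContDiffAt.pV {n : ℕ∞ω} (hf : ContDiffAt ℝ (n + 1) f x) : ContDiffAt ℝ n (pV f) x :=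
  (hf.fderiv_right le_rfl).clm_apply contDiffAt_const

theorem pS_pV_comm (hf : ContDiffAt ℝ 2 f x) : pS (pV f) x = pV (pS f) x := by
  have hd : DifferentiableAt ℝ (fderiv ℝ f) x :=
    (hf.fderiv_right (m := 1) le_rfl).differentiableAt one_ne_zero
  change fderiv ℝ (fun y => fderiv ℝ f y (0, 1)) x (1, 0) =
    fderiv ℝ (fun y => fderiv ℝ f y (1, 0)) x (0, 1)
  rw [fderiv_clm_apply hd (differentiableAt_const _),
    fderiv_clm_apply hd (differentiableAt_const _)]
  simpa using (hf.isSymmSndFDerivAt (by simp)).eq (1, 0) (0, 1)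

theorem pV_e12_eq_pS_e22 (hf : ContDiffAt ℝ 3 f x) : pV (e12 f) x = pS (e22 f) x := by
  have hcomm : pS (pV f) =ᶠ[𝓝 x] e12 f :=
    (hf.eventually (by simp)).mono fun y hy => pS_pV_comm (hy.of_le (by norm_num))
  rw [← hcomm.pV_eq, ← pS_pV_comm (hf.pV (n := 2)), e22]

end PartialDeriv

section HessianMetric

variable {f : ℝ × ℝ → ℝ} {x : ℝ × ℝ} {c : ℝ}

theorem pS_e11_eq (hT : DifferentiableAt ℝ (pS f) x) (h11 : e11 f =ᶠ[𝓝 x] fun y => pS f y / c) :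
    pS (e11 f) x = e11 f x / c :=
  h11.pS_eq.trans (pS_eq_of_hasDerivAt (by fun_prop) (hT.hasDerivAt_pS.div_const c))

theorem pV_e11_eq (hT : DifferentiableAt ℝ (pS f) x) (h11 : e11 f =ᶠ[𝓝 x] fun y => pS f y / c) :
    pV (e11 f) x = e12 f x / c :=
  h11.pV_eq.trans (pV_eq_of_hasDerivAt (by fun_prop) (hT.hasDerivAt_pV.div_const c))

theorem pS_e12_eq (hf : ContDiffAt ℝ 3 f x) (h11 : e11 f =ᶠ[𝓝 x] fun y => pS f y / c) :
    pS (e12 f) x = e12 f x / c :=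
  (pS_pV_comm (hf.pS (n := 2))).trans
    (pV_e11_eq ((hf.pS (n := 2)).differentiableAt (by norm_num)) h11)

theorem detM_eq (hf : ContDiffAt ℝ 3 f x) (h11 : e11 f =ᶠ[𝓝 x] fun y => pS f y / c) :
    detM f x = -(pS (e22 f) x - e22 f x / c) * (e11 f x * pS (e22 f) x - e12 f x ^ 2 / c) := by
  have hT : DifferentiableAt ℝ (pS f) x := (hf.pS (n := 2)).differentiableAt (by norm_num)
  rw [detM, Matrix.det_fin_three]
  simp only [Matrix.of_apply, Matrix.cons_val', Matrix.cons_val_zero, Matrix.cons_val_one,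
    Matrix.cons_val_two, Matrix.empty_val', Matrix.cons_val_fin_one, Matrix.head_cons,
    Matrix.tail_cons, Matrix.head_fin_const]
  rw [pS_e11_eq hT h11, pV_e11_eq hT h11, pS_e12_eq hf h11, pV_e12_eq_pS_e22 hf]
  ring

end HessianMetric

section ElementarySystem

variable {U α k : ℝ × ℝ → ℝ} {x : ℝ × ℝ} {c : ℝ}

/-- Symmetry of the third derivatives of `U` forces `∂(α/k)/∂S = 0`. -/
theorem pS_mul_eq_mul_pS (hU : ContDiffAt ℝ 3 U x) (hα : DifferentiableAt ℝ α x)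
    (hk : DifferentiableAt ℝ k x) (hT : pS U x ≠ 0) (hk0 : k x ≠ 0) (hc : c ≠ 0)
    (h11 : e11 U =ᶠ[𝓝 x] fun y => pS U y / c)
    (h12 : e12 U =ᶠ[𝓝 x] fun y => -(pS U y * α y) / (k y * c)) :
    pS α x * k x = α x * pS k x := by
  have hTd : DifferentiableAt ℝ (pS U) x := (hU.pS (n := 2)).differentiableAt (by norm_num)
  have hderiv := pS_eq_of_hasDerivAt (f := fun y => -(pS U y * α y) / (k y * c))
    (by fun_prop (disch := exact mul_ne_zero hk0 hc))
    ((hTd.hasDerivAt_pS.mul hα.hasDerivAt_pS).neg.div (hk.hasDerivAt_pS.mul_const c)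
      (mul_ne_zero hk0 hc))
  simp only [Prod.mk.eta, Pi.mul_apply, Pi.neg_apply] at hderiv
  have hsymm := pS_e12_eq hU h11
  rw [h12.pS_eq, hderiv, h12.eq_of_nhds] at hsymm
  change _ = (-(pS U x * α x) / (k x * c)) / c at hsymm
  rw [← e11, h11.eq_of_nhds] at hsymm
  field_simp at hsymm
  exact mul_left_cancel₀ hc (by linear_combination -hsymm)

theorem pS_e22_eq (hTd : DifferentiableAt ℝ (pS U) x) (hα : DifferentiableAt ℝ α x)
    (hk : DifferentiableAt ℝ k x) (hk0 : k x ≠ 0) (hV : x.2 ≠ 0) (hc : c ≠ 0)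
    (h11 : e11 U x = pS U x / c) (hαk : pS α x * k x = α x * pS k x)
    (h22 : e22 U =ᶠ[𝓝 x] fun y => (c + y.2 * pS U y * α y ^ 2 / k y) / (y.2 * k y * c)) :
    pS (e22 U) x = pS U x * α x ^ 2 / (k x ^ 2 * c ^ 2) - pS k x / (x.2 * k x ^ 2) := by
  have hden : x.2 * k x * c ≠ 0 := mul_ne_zero (mul_ne_zero hV hk0) hc
  have hderiv := pS_eq_of_hasDerivAt
    (f := fun y => (c + y.2 * pS U y * α y ^ 2 / k y) / (y.2 * k y * c))
    (by fun_prop (disch := assumption))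
    (((((hTd.hasDerivAt_pS.const_mul x.2).mul (hα.hasDerivAt_pS.pow 2)).div hk.hasDerivAt_pS
      hk0).const_add c).div ((hk.hasDerivAt_pS.const_mul x.2).mul_const c) hden)
  simp only [Prod.mk.eta, Pi.mul_apply, Pi.pow_apply, Pi.div_apply] at hderiv
  have hαS : pS α x = α x * pS k x / k x := by rw [← hαk]; field_simp
  rw [h22.pS_eq, hderiv, ← e11, h11, hαS]
  field_simp
  ring

theorem scalarCurv_eq (hU : ContDiffAt ℝ 3 U x) (hα : DifferentiableAt ℝ α x)
    (hk : DifferentiableAt ℝ k x) (hT : pS U x ≠ 0) (hk0 : k x ≠ 0) (hV : x.2 ≠ 0) (hc : c ≠ 0)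
    (h11 : e11 U =ᶠ[𝓝 x] fun y => pS U y / c)
    (h12 : e12 U =ᶠ[𝓝 x] fun y => -(pS U y * α y) / (k y * c))
    (h22 : e22 U =ᶠ[𝓝 x] fun y => (c + y.2 * pS U y * α y ^ 2 / k y) / (y.2 * k y * c)) :
    scalarCurv U x = pS k x * (c * pS k x + k x) / (4 * pS U x * k x ^ 2) := by
  have hTd : DifferentiableAt ℝ (pS U) x := (hU.pS (n := 2)).differentiableAt (by norm_num)
  have hZ := pS_e22_eq hTd hα hk hk0 hV hc h11.eq_of_nhds
    (pS_mul_eq_mul_pS hU hα hk hT hk0 hc h11 h12) h22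
  rw [scalarCurv, detHess, detM_eq hU h11, hZ, h11.eq_of_nhds, h12.eq_of_nhds, h22.eq_of_nhds]
  field_simp
  ring

end ElementarySystem

theorem mul_add_neg_iff {a b c : ℝ} (hc : 0 < c) (hb : 0 < b) :
    a * (c * a + b) < 0 ↔ -b / c < a ∧ a < 0 := by
  rw [div_lt_iff₀ hc, mul_neg_iff]
  constructor
  · rintro (⟨ha, h⟩ | ⟨ha, h⟩)
    · nlinarith
    · exact ⟨by linarith, ha⟩
  · rintro ⟨h, ha⟩
    exact Or.inr ⟨ha, by linarith⟩

theorem neg_div_lt_and_neg_iff {a b c : ℝ} (hb : 0 < b) :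
    (-b / c < a ∧ a < 0) ↔ (-(1 / c) < a / b ∧ a / b < 0) := by
  rw [lt_div_iff₀ hb, div_lt_iff₀ hb, zero_mul, neg_mul, one_div_mul_eq_div, neg_div]

theorem scalar_curvature_negative_iff_general
    (D : Set (ℝ × ℝ)) (hD : IsOpen D) (hDV : ∀ x ∈ D, 0 < x.2)
    (U Cv α k : ℝ × ℝ → ℝ)
    (hU : ContDiffOn ℝ (⊤ : ℕ∞) U D)
    (hα : ContDiffOn ℝ (⊤ : ℕ∞) α D)
    (hk : ContDiffOn ℝ (⊤ : ℕ∞) k D)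
    (h11 : ∀ x ∈ D, e11 U x = pS U x / Cv x)
    (h12 : ∀ x ∈ D, e12 U x = -(pS U x * α x) / (k x * Cv x))
    (h22 : ∀ x ∈ D,
      e22 U x = (Cv x + x.2 * pS U x * α x ^ 2 / k x) / (x.2 * k x * Cv x))
    (cv : ℝ) (hconst : ∀ x ∈ D, Cv x = cv)
    (hTpos : ∀ x ∈ D, 0 < pS U x)
    (hCvpos : ∀ x ∈ D, 0 < Cv x)
    (hkpos : ∀ x ∈ D, 0 < k x) :
    ∀ x ∈ D,
      (scalarCurv U x < 0 ↔ (-(k x) / Cv x < pS k x ∧ pS k x < 0)) ∧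
      (scalarCurv U x < 0 ↔
        (-(1 / Cv x) < pS (fun y => Real.log (k y)) x ∧
          pS (fun y => Real.log (k y)) x < 0)) := by
  intro x hx
  have hD_nhds : D ∈ 𝓝 x := hD.mem_nhds hx
  have hc : 0 < cv := hconst x hx ▸ hCvpos x hx
  have hT : 0 < pS U x := hTpos x hx
  have hk_pos : 0 < k x := hkpos x hx
  have hkd : DifferentiableAt ℝ k x := (hk.contDiffAt hD_nhds).differentiableAt (by simp)
  have hR := scalarCurv_eq ((hU.contDiffAt hD_nhds).of_le (by norm_cast))
    ((hα.contDiffAt hD_nhds).differentiableAt (by simp)) hkd hT.ne' hk_pos.ne' (hDV x hx).ne' hc.ne'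
    (eventually_of_mem hD_nhds fun y hy => by rw [h11 y hy, hconst y hy])
    (eventually_of_mem hD_nhds fun y hy => by rw [h12 y hy, hconst y hy])
    (eventually_of_mem hD_nhds fun y hy => by rw [h22 y hy, hconst y hy])
  have hR_neg : scalarCurv U x < 0 ↔ pS k x * (cv * pS k x + k x) < 0 := by
    rw [hR, div_lt_iff₀ (by positivity), zero_mul]
  rw [hconst x hx, hR_neg, mul_add_neg_iff hc hk_pos, pS_log hkd hk_pos.ne']
  exact ⟨Iff.rfl, neg_div_lt_and_neg_iff hk_pos⟩

/-- For an elementary thermodynamical system (hypotheses as in Identity I) with `C_v` constant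
on `D`, `α` nowhere zero, and `T, C_v, k > 0` on `D`: at any point of `D` the scalar curvature
of the Hessian metric of `U` is negative if and only if `−k/C_v < ∂k/∂S < 0` there
(equivalently, `−1/C_v < ∂(ln k)/∂S < 0`). -/
theorem scalar_curvature_negative_iff
    (D : Set (ℝ × ℝ)) (hD : IsOpen D) (hDV : ∀ x ∈ D, 0 < x.2)
    (U Cv α k : ℝ × ℝ → ℝ)
    (hU : ContDiffOn ℝ (⊤ : ℕ∞) U D)
    (hCv : ContDiffOn ℝ (⊤ : ℕ∞) Cv D)
    (hα : ContDiffOn ℝ (⊤ : ℕ∞) α D)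
    (hk : ContDiffOn ℝ (⊤ : ℕ∞) k D)
    (hT0 : ∀ x ∈ D, pS U x ≠ 0)
    (hCv0 : ∀ x ∈ D, Cv x ≠ 0)
    (hk0 : ∀ x ∈ D, k x ≠ 0)
    (h11 : ∀ x ∈ D, e11 U x = pS U x / Cv x)
    (h12 : ∀ x ∈ D, e12 U x = -(pS U x * α x) / (k x * Cv x))
    (h22 : ∀ x ∈ D,
      e22 U x = (Cv x + x.2 * pS U x * α x ^ 2 / k x) / (x.2 * k x * Cv x))
    (cv : ℝ) (hconst : ∀ x ∈ D, Cv x = cv)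
    (hα0 : ∀ x ∈ D, α x ≠ 0)
    (hTpos : ∀ x ∈ D, 0 < pS U x)
    (hCvpos : ∀ x ∈ D, 0 < Cv x)
    (hkpos : ∀ x ∈ D, 0 < k x) :
    ∀ x ∈ D,
      (scalarCurv U x < 0 ↔ (-(k x) / Cv x < pS k x ∧ pS k x < 0)) ∧
      (scalarCurv U x < 0 ↔
        (-(1 / Cv x) < pS (fun y => Real.log (k y)) x ∧
          pS (fun y => Real.log (k y)) x < 0)) :=
  scalar_curvature_negative_iff_general D hD hDV U Cv α k hU hα hk h11 h12 h22 cv hconst hTpos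
    hCvpos hkpos
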